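/- arXiv:2409.06905 — 2 statements merged into one kernel-verified Lean document; each statement's English description precedes it below -/
import Mathlib

section
/- Let u, v be mean-zero smooth functions on the torus 𝕋 = ℝ/2πℤ and let T_δ be the Tilbert transform, namely the Fourier multiplier with symbol −i·coth(δn) for n ≠ 0 and 0 at n = 0. Then T_δ((T_δ u)·v + u·(T_δ v)) = P_{≠0}((T_δ u)(T_δ v) − u·v), where P_{≠0} projects away the zero Fourier mode. -/
open Real

/-- `coth x = (e^x + e^{-x})/(e^x - e^{-x}) = cosh x / sinh x` (for `x ≠ 0`). -/
noncomputable def myCoth (x : ℝ) : ℝ := Real.cosh x / Real.sinh x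

/-- The `n`-th Fourier coefficient of a `2π`-periodic function `f : ℝ → ℂ`
(up to normalization): `(2π)⁻¹ ∫_0^{2π} f(x) e^{-inx} dx`. -/
noncomputable def fCoeff (f : ℝ → ℂ) (n : ℤ) : ℂ :=
  ((2 * π : ℝ) : ℂ)⁻¹ * ∫ x in (0 : ℝ)..(2 * π), f x * Complex.exp (-Complex.I * n * x)

/-- The symbol of the Tilbert transform: `−i coth(δn)` for `n ≠ 0`, and `0` at `n = 0`. -/
noncomputable def tilbSymb (δ : ℝ) (n : ℤ) : ℂ :=
  if n = 0 then 0 else -Complex.I * (myCoth (δ * n) : ℝ)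


open MeasureTheory

instance fact2pi : Fact ((0:ℝ) < 2 * π) := ⟨Real.two_pi_pos⟩


lemma myCoth_pos {x : ℝ} (hx : 0 < x) : 0 < myCoth x :=
  div_pos (Real.cosh_pos x) (Real.sinh_pos_iff.mpr hx)

lemma myCoth_neg (x : ℝ) : myCoth (-x) = -myCoth x := by
  simp [myCoth, Real.cosh_neg, Real.sinh_neg, neg_div, div_neg]

lemma myCoth_anti {a b : ℝ} (ha : 0 < a) (hab : a ≤ b) : myCoth b ≤ myCoth a := by
  have hb : 0 < b := lt_of_lt_of_le ha hab
  rw [myCoth, myCoth, div_le_div_iff₀ (Real.sinh_pos_iff.mpr hb) (Real.sinh_pos_iff.mpr ha)]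
  have h : Real.cosh a * Real.sinh b - Real.cosh b * Real.sinh a = Real.sinh (b - a) := by
    rw [Real.sinh_sub]; ring
  nlinarith [Real.sinh_nonneg_iff.mpr (by linarith : (0:ℝ) ≤ b - a)]

lemma myCoth_identity {a b : ℝ} (ha : a ≠ 0) (hb : b ≠ 0) (hab : a + b ≠ 0) :
    myCoth (a + b) * (myCoth a + myCoth b) = myCoth a * myCoth b + 1 := by
  have h1 : Real.sinh a ≠ 0 := by simpa [Real.sinh_eq_zero] using ha
  have h2 : Real.sinh b ≠ 0 := by simpa [Real.sinh_eq_zero] using hb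
  have h3 : Real.sinh (a + b) ≠ 0 := by simpa [Real.sinh_eq_zero] using hab
  rw [myCoth, myCoth, myCoth]
  field_simp
  rw [Real.cosh_add, Real.sinh_add]
  ring

lemma tilbSymb_norm_le {δ : ℝ} (hδ : 0 < δ) (k : ℤ) : ‖tilbSymb δ k‖ ≤ myCoth δ := by
  rcases eq_or_ne k 0 with rfl | hk
  · simpa [tilbSymb] using (myCoth_pos hδ).le
  · rw [tilbSymb, if_neg hk, norm_mul]
    simp only [norm_neg, Complex.norm_I, one_mul, Complex.norm_real, Real.norm_eq_abs]
    rcases hk.lt_or_gt with h | h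
    · have hk1 : (1:ℝ) ≤ -(k:ℝ) := by
        have : k ≤ -1 := by omega
        have : ((k:ℝ)) ≤ ((-1 : ℤ) : ℝ) := by exact_mod_cast this
        push_cast at this; linarith
      have heq : δ * (k:ℝ) = -(δ * (-(k:ℝ))) := by ring
      rw [heq, myCoth_neg, abs_neg, abs_of_pos (myCoth_pos (by nlinarith))]
      exact myCoth_anti hδ (by nlinarith)
    · have hk1 : (1:ℝ) ≤ (k:ℝ) := by exact_mod_cast h
      rw [abs_of_pos (myCoth_pos (by nlinarith))]
      exact myCoth_anti hδ (by nlinarith)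

lemma tilbSymb_identity {δ : ℝ} (hδ : 0 < δ) {k m : ℤ} (hk : k ≠ 0) (hm : m ≠ 0)
    (hkm : k + m ≠ 0) :
    tilbSymb δ (k + m) * (tilbSymb δ k + tilbSymb δ m) =
      tilbSymb δ k * tilbSymb δ m - 1 := by
  have ha : δ * (k:ℝ) ≠ 0 := mul_ne_zero hδ.ne' (by exact_mod_cast hk)
  have hb : δ * (m:ℝ) ≠ 0 := mul_ne_zero hδ.ne' (by exact_mod_cast hm)
  have hab : δ * (k:ℝ) + δ * (m:ℝ) ≠ 0 := by
    rw [← mul_add]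
    exact mul_ne_zero hδ.ne' (by exact_mod_cast hkm)
  have h := myCoth_identity ha hb hab
  rw [tilbSymb, tilbSymb, tilbSymb, if_neg hk, if_neg hm, if_neg hkm]
  have hcast : δ * ((k + m : ℤ) : ℝ) = δ * (k:ℝ) + δ * (m:ℝ) := by push_cast; ring
  rw [hcast]
  have hC : (myCoth (δ * (k:ℝ) + δ * (m:ℝ)) : ℂ) * ((myCoth (δ * (k:ℝ)) : ℝ) + (myCoth (δ * (m:ℝ)) : ℝ)) =
      (myCoth (δ * (k:ℝ)) : ℂ) * (myCoth (δ * (m:ℝ)) : ℝ) + 1 := by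
    exact_mod_cast congrArg (fun x : ℝ => (x : ℂ)) h
  linear_combination (((myCoth (δ * (k:ℝ) + δ * (m:ℝ)) : ℂ)) * ((myCoth (δ * (k:ℝ)) : ℂ) + (myCoth (δ * (m:ℝ)) : ℂ)) - (myCoth (δ * (k:ℝ)) : ℂ) * (myCoth (δ * (m:ℝ)) : ℂ)) * Complex.I_mul_I - hC


/-- The periodic lift of a continuous `2π`-periodic function as a continuous map on the circle. -/
noncomputable def pc {f : ℝ → ℂ} (hc : Continuous f) (hp : Function.Periodic f (2 * π)) :
    C(AddCircle (2 * π), ℂ) := ⟨hp.lift, hc.quotient_liftOn' _⟩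

lemma pc_coe {f : ℝ → ℂ} (hc : Continuous f) (hp : Function.Periodic f (2 * π)) (x : ℝ) :
    pc hc hp (x : AddCircle (2 * π)) = f x := rfl

lemma fourierCoeff_pc {f : ℝ → ℂ} (hc : Continuous f) (hp : Function.Periodic f (2 * π))
    (n : ℤ) : fourierCoeff (⇑(pc hc hp)) n = fCoeff f n := by
  rw [fourierCoeff_eq_intervalIntegral _ n 0, fCoeff]
  rw [zero_add]
  have : ∀ x : ℝ, (fourier (-n) (x : AddCircle (2 * π))) • (pc hc hp (x : AddCircle (2*π)))
      = f x * Complex.exp (-Complex.I * n * x) := by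
    intro x
    rw [pc_coe, fourier_coe_apply, smul_eq_mul, mul_comm]
    congr 1
    congr 1
    have hpi : (π : ℂ) ≠ 0 := Complex.ofReal_ne_zero.mpr Real.pi_ne_zero
    field_simp
    push_cast
    ring
  rw [intervalIntegral.integral_congr (fun x _ => this x)]
  rw [Complex.real_smul]
  push_cast
  rw [one_div]

section A
variable {f : ℝ → ℂ}

lemma integrable_cont {h : AddCircle (2 * π) → ℂ} (hc : Continuous h) :
    Integrable h (@AddCircle.haarAddCircle (2 * π) _) :=
  (BoundedContinuousFunction.mkOfCompact (⟨h, hc⟩ : C(AddCircle (2*π), ℂ))).integrable _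

lemma norm_fourier_apply (n : ℤ) (t : AddCircle (2 * π)) : ‖fourier n t‖ = 1 :=
  Circle.norm_coe _

/-- The continuous linear functional `H ↦ ∫ fourier (-n) * H * G`. -/
noncomputable def coeffCLM (G : C(AddCircle (2 * π), ℂ)) (n : ℤ) :
    C(AddCircle (2 * π), ℂ) →L[ℂ] ℂ :=
  LinearMap.mkContinuous
    { toFun := fun H => ∫ t, fourier (-n) t * (H t * G t) ∂(@AddCircle.haarAddCircle (2*π) _)
      map_add' := by
        intro H1 H2
        have h1 : Integrable (fun t => fourier (-n) t * (H1 t * G t)) (@AddCircle.haarAddCircle (2*π) _) :=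
          integrable_cont (((map_continuous _).mul ((map_continuous H1).mul (map_continuous G))))
        have h2 : Integrable (fun t => fourier (-n) t * (H2 t * G t)) (@AddCircle.haarAddCircle (2*π) _) :=
          integrable_cont (((map_continuous _).mul ((map_continuous H2).mul (map_continuous G))))
        simp only [ContinuousMap.add_apply, add_mul, mul_add]
        exact integral_add h1 h2
      map_smul' := by
        intro c H
        simp only [ContinuousMap.smul_apply, smul_eq_mul, RingHom.id_apply]
        rw [← integral_const_mul]
        congr 1; ext t; ring }
    ‖G‖
    (by
      intro H
      simp only [LinearMap.coe_mk, AddHom.coe_mk]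
      have : ∀ t : AddCircle (2*π), ‖fourier (-n) t * (H t * G t)‖ ≤ ‖H‖ * ‖G‖ := by
        intro t
        rw [norm_mul, norm_fourier_apply, one_mul, norm_mul]
        exact mul_le_mul (H.norm_coe_le_norm t) (G.norm_coe_le_norm t) (norm_nonneg _)
          (norm_nonneg _)
      calc ‖∫ t, fourier (-n) t * (H t * G t) ∂(@AddCircle.haarAddCircle (2*π) _)‖
          ≤ ‖H‖ * ‖G‖ * ((@AddCircle.haarAddCircle (2*π) _) Set.univ).toReal :=
            norm_integral_le_of_norm_le_const (Filter.Eventually.of_forall this)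
        _ = ‖G‖ * ‖H‖ := by simp [measure_univ]; ring)

lemma hasSum_fourierCoeff_mul (F G : C(AddCircle (2 * π), ℂ))
    (hF : Summable fun k => fourierCoeff (⇑F) k) (n : ℤ) :
    HasSum (fun k => fourierCoeff (⇑F) k * fourierCoeff (⇑G) (n - k))
      (fourierCoeff (fun t => F t * G t) n) := by
  have key := (coeffCLM G n).hasSum (hasSum_fourier_series_of_summable hF)
  have h1 : ∀ k : ℤ, coeffCLM G n (fourierCoeff (⇑F) k • fourier k)
      = fourierCoeff (⇑F) k * fourierCoeff (⇑G) (n - k) := by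
    intro k
    rw [_root_.map_smul, smul_eq_mul]
    congr 1
    show (∫ t, fourier (-n) t * (fourier k t * G t) ∂(@AddCircle.haarAddCircle (2*π) _)) = _
    rw [fourierCoeff]
    congr 1; ext t
    rw [smul_eq_mul, ← mul_assoc, ← fourier_add, show -n + k = -(n - k) by ring]
  have h2 : coeffCLM G n F = fourierCoeff (fun t => F t * G t) n := by
    show (∫ t, fourier (-n) t * (F t * G t) ∂(@AddCircle.haarAddCircle (2*π) _)) = _
    rw [fourierCoeff]
    simp only [smul_eq_mul]
  rw [h2] at key
  simp only [h1] at key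
  exact key
end A

lemma cmap_ext_of_fourierCoeff {F G : C(AddCircle (2 * π), ℂ)}
    (h : ∀ n : ℤ, fourierCoeff (⇑F) n = fourierCoeff (⇑G) n) : F = G := by
  apply ContinuousMap.toLp_injective (E := ℂ) (p := 2) (𝕜 := ℂ) (@AddCircle.haarAddCircle (2*π) _)
  apply fourierBasis.repr.injective
  ext i
  rw [fourierBasis_repr, fourierBasis_repr, fourierCoeff_toLp, fourierCoeff_toLp, h]

lemma fCoeff_add {f g : ℝ → ℂ} (hf : Continuous f) (hg : Continuous g) (n : ℤ) :
    fCoeff (fun x => f x + g x) n = fCoeff f n + fCoeff g n := by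
  unfold fCoeff
  rw [← mul_add, ← intervalIntegral.integral_add
    ((by fun_prop : Continuous fun x : ℝ => f x * Complex.exp (-Complex.I * n * x)).intervalIntegrable _ _)
    ((by fun_prop : Continuous fun x : ℝ => g x * Complex.exp (-Complex.I * n * x)).intervalIntegrable _ _)]
  congr 1
  apply intervalIntegral.integral_congr
  intro x _
  ring

lemma fCoeff_sub {f g : ℝ → ℂ} (hf : Continuous f) (hg : Continuous g) (n : ℤ) :
    fCoeff (fun x => f x - g x) n = fCoeff f n - fCoeff g n := by
  unfold fCoeff
  rw [← mul_sub, ← intervalIntegral.integral_sub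
    ((by fun_prop : Continuous fun x : ℝ => f x * Complex.exp (-Complex.I * n * x)).intervalIntegrable _ _)
    ((by fun_prop : Continuous fun x : ℝ => g x * Complex.exp (-Complex.I * n * x)).intervalIntegrable _ _)]
  congr 1
  apply intervalIntegral.integral_congr
  intro x _
  ring

lemma periodic_deriv' {f : ℝ → ℂ} {c : ℝ} (hp : Function.Periodic f c) :
    Function.Periodic (deriv f) c := by
  intro x
  have h : (fun y => f (y + c)) = f := funext fun y => hp y
  calc deriv f (x + c) = deriv (fun y => f (y + c)) x := (deriv_comp_add_const f c x).symm
    _ = deriv f x := by rw [h]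

lemma fCoeff_eq_fourierCoeffOn (f : ℝ → ℂ) (n : ℤ) :
    fCoeff f n = fourierCoeffOn Real.two_pi_pos f n := by
  rw [fourierCoeffOn_eq_integral, fCoeff]
  have : ∀ x : ℝ, (fourier (-n) (x : AddCircle (2 * π - 0))) • f x
      = f x * Complex.exp (-Complex.I * n * x) := by
    intro x
    rw [fourier_coe_apply, smul_eq_mul, mul_comm]
    congr 2
    have hpi : (π : ℂ) ≠ 0 := Complex.ofReal_ne_zero.mpr Real.pi_ne_zero
    push_cast
    field_simp
    ring
  rw [intervalIntegral.integral_congr (fun x _ => this x)]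
  rw [Complex.real_smul]
  push_cast
  rw [one_div, sub_zero]

lemma fCoeff_deriv {f : ℝ → ℂ} (hf : ContDiff ℝ (↑(⊤:ℕ∞)) f) (hp : Function.Periodic f (2 * π))
    {n : ℤ} (hn : n ≠ 0) :
    fCoeff f n = fCoeff (deriv f) n / (Complex.I * n) := by
  have hd : ∀ x ∈ Set.uIcc (0:ℝ) (2*π), HasDerivAt f (deriv f x) x :=
    fun x _ => ((contDiff_infty_iff_deriv.mp hf).1 x).hasDerivAt
  have hint : IntervalIntegrable (deriv f) MeasureTheory.volume 0 (2*π) :=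
    ((contDiff_infty_iff_deriv.mp hf).2.continuous).intervalIntegrable _ _
  have key := fourierCoeffOn_of_hasDerivAt Real.two_pi_pos hn hd hint
  have hper : f (2*π) = f 0 := by simpa using hp 0
  rw [hper, sub_self, mul_zero, zero_sub] at key
  rw [fCoeff_eq_fourierCoeffOn, fCoeff_eq_fourierCoeffOn, key]
  have hpi : (π : ℂ) ≠ 0 := Complex.ofReal_ne_zero.mpr Real.pi_ne_zero
  have hnC : ((n:ℤ):ℂ) ≠ 0 := Int.cast_ne_zero.mpr hn
  have hI : Complex.I ≠ 0 := Complex.I_ne_zero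
  push_cast
  field_simp
  ring

lemma norm_fCoeff_le {f : ℝ → ℂ} {C : ℝ}
    (hC : ∀ x ∈ Set.Icc (0:ℝ) (2*π), ‖f x‖ ≤ C) (n : ℤ) : ‖fCoeff f n‖ ≤ C := by
  have hCnn : 0 ≤ C := le_trans (norm_nonneg _) (hC 0 ⟨le_refl 0, by positivity⟩)
  rw [fCoeff, norm_mul]
  have h1 : ‖∫ x in (0:ℝ)..(2*π), f x * Complex.exp (-Complex.I * n * x)‖ ≤ C * |2*π - 0| := by
    apply intervalIntegral.norm_integral_le_of_norm_le_const
    intro x hx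
    rw [Set.uIoc_of_le Real.two_pi_pos.le] at hx
    have hx' : x ∈ Set.Icc (0:ℝ) (2*π) := ⟨hx.1.le, hx.2⟩
    rw [norm_mul]
    have hexp : ‖Complex.exp (-Complex.I * n * x)‖ = 1 := by
      rw [Complex.norm_exp]
      have : (-Complex.I * n * x).re = 0 := by simp
      rw [this, Real.exp_zero]
    rw [hexp, mul_one]
    exact hC x hx'
  have h2 : ‖(((2*π:ℝ)):ℂ)⁻¹‖ = (2*π)⁻¹ := by
    rw [norm_inv, Complex.norm_real, Real.norm_eq_abs, abs_of_pos Real.two_pi_pos]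
  rw [h2]
  calc (2*π)⁻¹ * ‖∫ x in (0:ℝ)..(2*π), f x * Complex.exp (-Complex.I * n * x)‖
      ≤ (2*π)⁻¹ * (C * |2*π - 0|) := by
        exact mul_le_mul_of_nonneg_left h1 (by positivity)
    _ = C := by
        rw [sub_zero, abs_of_pos Real.two_pi_pos]
        field_simp

lemma summable_fCoeff {f : ℝ → ℂ} (hf : ContDiff ℝ (↑(⊤:ℕ∞)) f)
    (hp : Function.Periodic f (2 * π)) : Summable (fCoeff f) := by
  have hf1 : ContDiff ℝ (↑(⊤:ℕ∞)) (deriv f) := (contDiff_infty_iff_deriv.mp hf).2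
  have hf2 : ContDiff ℝ (↑(⊤:ℕ∞)) (deriv (deriv f)) := (contDiff_infty_iff_deriv.mp hf1).2
  have hp1 := periodic_deriv' hp
  obtain ⟨C, hC⟩ := (isCompact_Icc : IsCompact (Set.Icc (0:ℝ) (2*π))).exists_bound_of_continuousOn
    (hf2.continuous.continuousOn)
  have hCb : ∀ n, ‖fCoeff (deriv (deriv f)) n‖ ≤ C := norm_fCoeff_le hC
  apply Summable.of_norm_bounded_eventually (g := fun n : ℤ => C * (1 / (n:ℝ)^2))
    ((summable_one_div_int_pow.mpr one_lt_two).mul_left C)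
  rw [Filter.eventually_cofinite]
  apply Set.Finite.subset (Set.finite_singleton (0:ℤ))
  intro n hn
  simp only [Set.mem_setOf_eq] at hn
  simp only [Set.mem_singleton_iff]
  by_contra hn0
  apply hn
  rw [fCoeff_deriv hf hp hn0, fCoeff_deriv hf1 hp1 hn0]
  have hnI : ‖Complex.I * (n:ℂ)‖ = |(n:ℝ)| := by
    rw [norm_mul, Complex.norm_I, one_mul]
    simp
  rw [norm_div, norm_div, hnI, div_div]
  have habs : |(n:ℝ)| * |(n:ℝ)| = (n:ℝ)^2 := by
    rw [← abs_mul, ← sq, abs_of_nonneg (sq_nonneg _)]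
  rw [habs, mul_one_div]
  have hn2 : (0:ℝ) ≤ (n:ℝ)^2 := sq_nonneg _
  gcongr
  exact hCb n

/-- Cotlar-type identity for the Tilbert transform `T_δ` (the Fourier multiplier with symbol
`−i coth(δn)` for `n ≠ 0` and `0` at `n = 0`): for mean-zero smooth `2π`-periodic `u, v`,
`T_δ((T_δ u)·v + u·(T_δ v)) = P_{≠0}((T_δ u)(T_δ v) − u·v)`.  Here `Tu`, `Tv` are the Tilbert
transforms of `u`, `v`; `Tw` is the Tilbert transform of `(T_δ u)·v + u·(T_δ v)`; and `z` is
the projection of `(T_δ u)(T_δ v) − u·v` away from the zero Fourier mode — all characterized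
via their Fourier coefficients. -/

theorem stmt10 (δ : ℝ) (hδ : 0 < δ) (u v Tu Tv Tw z : ℝ → ℂ)
    (hu : ContDiff ℝ (⊤ : ℕ∞) u) (hup : Function.Periodic u (2 * π)) (hu0 : fCoeff u 0 = 0)
    (hv : ContDiff ℝ (⊤ : ℕ∞) v) (hvp : Function.Periodic v (2 * π)) (hv0 : fCoeff v 0 = 0)
    (hTu : Continuous Tu) (hTup : Function.Periodic Tu (2 * π))
    (hTuc : ∀ n : ℤ, fCoeff Tu n = tilbSymb δ n * fCoeff u n)
    (hTv : Continuous Tv) (hTvp : Function.Periodic Tv (2 * π))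
    (hTvc : ∀ n : ℤ, fCoeff Tv n = tilbSymb δ n * fCoeff v n)
    (hTw : Continuous Tw) (hTwp : Function.Periodic Tw (2 * π))
    (hTwc : ∀ n : ℤ,
      fCoeff Tw n = tilbSymb δ n * fCoeff (fun x => Tu x * v x + u x * Tv x) n)
    (hz : Continuous z) (hzp : Function.Periodic z (2 * π)) (hz0 : fCoeff z 0 = 0)
    (hzc : ∀ n : ℤ, n ≠ 0 → fCoeff z n = fCoeff (fun x => Tu x * Tv x - u x * v x) n) :
    Tw = z := by
  have hu' : ContDiff ℝ (↑(⊤:ℕ∞)) u := hu.of_le (by simp)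
  have hv' : ContDiff ℝ (↑(⊤:ℕ∞)) v := hv.of_le (by simp)
  have hcu : Continuous u := hu'.continuous
  have hcv : Continuous v := hv'.continuous
  have hsu := summable_fCoeff hu' hup
  have hsv := summable_fCoeff hv' hvp
  have hsTu : Summable (fCoeff Tu) := by
    apply Summable.of_norm_bounded (g := fun k => myCoth δ * ‖fCoeff u k‖) (hsu.norm.mul_left _)
    intro k
    rw [hTuc k, norm_mul]
    exact mul_le_mul_of_nonneg_right (tilbSymb_norm_le hδ k) (norm_nonneg _)
  have hsTv : Summable (fCoeff Tv) := by
    apply Summable.of_norm_bounded (g := fun k => myCoth δ * ‖fCoeff v k‖) (hsv.norm.mul_left _)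
    intro k
    rw [hTvc k, norm_mul]
    exact mul_le_mul_of_nonneg_right (tilbSymb_norm_le hδ k) (norm_nonneg _)
  have conv : ∀ {f g : ℝ → ℂ}, Continuous f → Function.Periodic f (2*π)
      → Continuous g → Function.Periodic g (2*π) → Summable (fCoeff f) → ∀ n : ℤ,
      HasSum (fun k => fCoeff f k * fCoeff g (n - k)) (fCoeff (fun x => f x * g x) n) := by
    intro f g hf hfp hg hgp hsf n
    have hsf' : Summable (fun k => fourierCoeff (⇑(pc hf hfp)) k) := by
      simpa only [fourierCoeff_pc] using hsf
    have key := hasSum_fourierCoeff_mul (pc hf hfp) (pc hg hgp) hsf' n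
    have hmul : (fun t => pc hf hfp t * pc hg hgp t) = ⇑(pc (hf.mul hg) (hfp.mul hgp)) := by
      funext t
      induction t using QuotientAddGroup.induction_on
      rfl
    rw [hmul, fourierCoeff_pc] at key
    simp only [fourierCoeff_pc] at key
    exact key
  have hcoeff : ∀ n : ℤ, fCoeff Tw n = fCoeff z n := by
    intro n
    rcases eq_or_ne n 0 with rfl | hn
    · rw [hTwc 0, hz0]; simp [tilbSymb]
    · rw [hTwc n, hzc n hn]
      have hel : fCoeff (fun x => Tu x * v x + u x * Tv x) n
          = fCoeff (fun x => Tu x * v x) n + fCoeff (fun x => u x * Tv x) n :=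
        fCoeff_add (hTu.mul hcv) (hcu.mul hTv) n
      have her : fCoeff (fun x => Tu x * Tv x - u x * v x) n
          = fCoeff (fun x => Tu x * Tv x) n - fCoeff (fun x => u x * v x) n :=
        fCoeff_sub (hTu.mul hTv) (hcu.mul hcv) n
      rw [hel, her]
      have H1 := conv hTu hTup hcv hvp hsTu n
      have H2 := conv hcu hup hTv hTvp hsu n
      have H3 := conv hTu hTup hTv hTvp hsTu n
      have H4 := conv hcu hup hcv hvp hsu n
      have HL := (H1.add H2).mul_left (tilbSymb δ n)
      have HR := H3.sub H4
      have hterm : (fun k => tilbSymb δ n *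
            (fCoeff Tu k * fCoeff v (n-k) + fCoeff u k * fCoeff Tv (n-k)))
          = fun k => fCoeff Tu k * fCoeff Tv (n-k) - fCoeff u k * fCoeff v (n-k) := by
        funext k
        rcases eq_or_ne k 0 with rfl | hk
        · rw [hTuc 0, hu0]
          simp [tilbSymb]
        · rcases eq_or_ne k n with rfl | hkn
          · simp only [sub_self, hTvc 0, hv0, tilbSymb, if_pos rfl]
            ring
          · have hm : n - k ≠ 0 := sub_ne_zero.mpr (Ne.symm hkn)
            rw [hTuc k, hTvc (n-k)]
            have hid := tilbSymb_identity hδ hk hm (by omega : k + (n - k) ≠ 0)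
            rw [show k + (n - k) = n from by ring] at hid
            linear_combination (fCoeff u k * fCoeff v (n - k)) * hid
      rw [hterm] at HL
      exact HL.unique HR
  have hfin : pc hTw hTwp = pc hz hzp :=
    cmap_ext_of_fourierCoeff (fun n => by rw [fourierCoeff_pc, fourierCoeff_pc, hcoeff n])
  funext x
  exact ContinuousMap.congr_fun hfin (x : AddCircle (2*π))
end

section
/- Let k ≥ 1 and for 0 < δ < ∞ define T_{δ,k/2}(n) = Σ_{ℓ=0, ℓ even}^{k} a_{k,ℓ}·|n|^{ℓ}·𝔎_δ(n)^{k−ℓ} where 𝔎_δ(n) = n coth(δn) − 1/δ and a_{k,ℓ} > 0 with Σ a_{k,ℓ} = 1. Then 0 ≤ |n|^k − T_{δ,k/2}(n) ≲ δ^{−1}|n|^{k−1} for |n| > 1/δ, and 0 ≤ |n|^k − T_{δ,k/2}(n) ≲ δ^{−k} for 0 < |n| ≤ 1/δ, with implicit constants depending only on k. -/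
open Real

/-- The ILW dispersion multiplier `𝔎_δ(n) = n · coth(δn) − 1/δ`. -/
noncomputable def Kmul (δ : ℝ) (n : ℤ) : ℝ := (n : ℝ) * myCoth (δ * n) - 1 / δ

/-- The deep-water Gaussian multiplier
`T_{δ,k/2}(n) = Σ_{ℓ even, 0 ≤ ℓ ≤ k} a_ℓ |n|^ℓ 𝔎_δ(n)^{k−ℓ}`. -/
noncomputable def Tmul (a : ℕ → ℝ) (k : ℕ) (δ : ℝ) (n : ℤ) : ℝ :=
  ∑ ℓ ∈ Finset.range (k + 1),
    if Even ℓ then a ℓ * |(n : ℝ)| ^ ℓ * Kmul δ n ^ (k - ℓ) else 0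

lemma sinh_lt_mul_cosh {x : ℝ} (hx : 0 < x) : sinh x < x * cosh x := by
  have hmono : StrictMonoOn (fun y ↦ y * cosh y - sinh y) (Set.Ici 0) := by
    refine strictMonoOn_of_deriv_pos (convex_Ici 0) (by fun_prop) fun y hy ↦ ?_
    rw [interior_Ici] at hy
    have hderiv :
        HasDerivAt (fun y ↦ y * cosh y - sinh y) (1 * cosh y + y * sinh y - cosh y) y :=
      ((hasDerivAt_id' y).mul (hasDerivAt_cosh y)).sub (hasDerivAt_sinh y)
    rw [hderiv.deriv, one_mul, add_sub_cancel_left]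
    exact mul_pos hy (sinh_pos_iff.mpr hy)
  simpa using hmono Set.self_mem_Ici (Set.mem_Ici.mpr hx.le) hx

-- Equivalent to `2x < e^{2x} - 1`.
lemma mul_cosh_lt_add_one_mul_sinh {x : ℝ} (hx : 0 < x) :
    x * cosh x < (x + 1) * sinh x := by
  have hexp : 2 * x + 1 < exp x * exp x := by
    rw [← exp_add, ← two_mul]
    exact add_one_lt_exp (by positivity)
  have hinv : exp (-x) * exp x = 1 := by rw [← exp_add, neg_add_cancel, exp_zero]
  rw [cosh_eq, sinh_eq]
  nlinarith [exp_pos x, exp_pos (-x)]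

lemma one_lt_mul_myCoth {x : ℝ} (hx : 0 < x) : 1 < x * myCoth x := by
  rw [myCoth, mul_div_assoc', one_lt_div (sinh_pos_iff.mpr hx)]
  exact sinh_lt_mul_cosh hx

lemma mul_myCoth_lt_add_one {x : ℝ} (hx : 0 < x) : x * myCoth x < x + 1 := by
  rw [myCoth, mul_div_assoc', div_lt_iff₀ (sinh_pos_iff.mpr hx)]
  exact mul_cosh_lt_add_one_mul_sinh hx

lemma self_lt_mul_myCoth {x : ℝ} (hx : 0 < x) : x < x * myCoth x := by
  refine lt_mul_of_one_lt_right hx ?_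
  rw [myCoth, one_lt_div (sinh_pos_iff.mpr hx)]
  exact sinh_lt_cosh x

lemma mul_myCoth_mul_abs (δ x : ℝ) : x * myCoth (δ * x) = |x| * myCoth (δ * |x|) := by
  rcases abs_choice x with h | h <;> rw [h]
  simp only [myCoth, mul_neg, cosh_neg, sinh_neg, div_neg, neg_mul, neg_neg]

lemma Kmul_eq {δ : ℝ} (hδ : δ ≠ 0) (n : ℤ) :
    Kmul δ n = (δ * |(n : ℝ)| * myCoth (δ * |(n : ℝ)|) - 1) / δ := by
  rw [Kmul, mul_myCoth_mul_abs]
  field_simp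

section Kmul

variable {δ : ℝ} {n : ℤ}

lemma mul_abs_intCast_pos (hδ : 0 < δ) (hn : n ≠ 0) : 0 < δ * |(n : ℝ)| :=
  mul_pos hδ (by positivity)

lemma Kmul_pos (hδ : 0 < δ) (hn : n ≠ 0) : 0 < Kmul δ n := by
  rw [Kmul_eq hδ.ne']
  exact div_pos (sub_pos.mpr (one_lt_mul_myCoth (mul_abs_intCast_pos hδ hn))) hδ

lemma Kmul_lt_abs (hδ : 0 < δ) (hn : n ≠ 0) : Kmul δ n < |(n : ℝ)| := by
  rw [Kmul_eq hδ.ne', div_lt_iff₀ hδ]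
  linarith [mul_myCoth_lt_add_one (mul_abs_intCast_pos hδ hn)]

lemma abs_sub_inv_lt_Kmul (hδ : 0 < δ) (hn : n ≠ 0) : |(n : ℝ)| - 1 / δ < Kmul δ n := by
  rw [Kmul_eq hδ.ne', lt_div_iff₀ hδ, sub_mul, one_div_mul_cancel hδ.ne']
  linarith [self_lt_mul_myCoth (mul_abs_intCast_pos hδ hn)]

end Kmul

section OrderedRing

variable {α : Type*} [CommRing α] [LinearOrder α] [IsStrictOrderedRing α]

lemma pow_sub_pow_le_mul_pow_mul_sub {a b : α} (hb : 0 ≤ b) (hba : b ≤ a) (m : ℕ) :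
    a ^ m - b ^ m ≤ m * a ^ (m - 1) * (a - b) := by
  have ha : 0 ≤ a := hb.trans hba
  calc a ^ m - b ^ m ≤ |a ^ m - b ^ m| := le_abs_self _
    _ ≤ |a - b| * m * max |a| |b| ^ (m - 1) := abs_pow_sub_pow_le ..
    _ = m * a ^ (m - 1) * (a - b) := by
      rw [abs_of_nonneg (sub_nonneg.mpr hba), abs_of_nonneg ha, abs_of_nonneg hb,
        max_eq_left hba]
      ring

lemma pow_le_pow_mul_pow_sub {a b : α} (hb : 0 ≤ b) (hba : b ≤ a) {k ℓ : ℕ} (hℓ : ℓ ≤ k) :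
    b ^ k ≤ a ^ ℓ * b ^ (k - ℓ) ∧ a ^ ℓ * b ^ (k - ℓ) ≤ a ^ k := by
  have hsplit (c : α) : c ^ k = c ^ ℓ * c ^ (k - ℓ) := by rw [← pow_add, Nat.add_sub_cancel' hℓ]
  have ha : 0 ≤ a := hb.trans hba
  rw [hsplit a, hsplit b]
  exact ⟨by gcongr, by gcongr⟩

lemma sum_mul_mem_Icc {ι : Type*} {s : Finset ι} {w f : ι → α} {lo hi : α}
    (hw : ∀ i ∈ s, 0 ≤ w i) (hsum : ∑ i ∈ s, w i = 1) (hf : ∀ i ∈ s, f i ∈ Set.Icc lo hi) :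
    ∑ i ∈ s, w i * f i ∈ Set.Icc lo hi := by
  constructor
  · calc lo = ∑ i ∈ s, w i * lo := by rw [← Finset.sum_mul, hsum, one_mul]
      _ ≤ ∑ i ∈ s, w i * f i :=
        Finset.sum_le_sum fun i hi ↦ mul_le_mul_of_nonneg_left (hf i hi).1 (hw i hi)
  · calc ∑ i ∈ s, w i * f i ≤ ∑ i ∈ s, w i * hi :=
        Finset.sum_le_sum fun i hi ↦ mul_le_mul_of_nonneg_left (hf i hi).2 (hw i hi)
      _ = hi := by rw [← Finset.sum_mul, hsum, one_mul]

end OrderedRing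

lemma Tmul_eq_sum (a : ℕ → ℝ) (k : ℕ) (δ : ℝ) (n : ℤ) :
    Tmul a k δ n = ∑ ℓ ∈ Finset.range (k + 1),
      (if Even ℓ then a ℓ else 0) * (|(n : ℝ)| ^ ℓ * Kmul δ n ^ (k - ℓ)) := by
  simp only [Tmul, ite_mul, zero_mul, mul_assoc]

lemma Tmul_mem_Icc {k : ℕ} {a : ℕ → ℝ} (ha : ∀ ℓ, ℓ ≤ k → Even ℓ → 0 < a ℓ)
    (hsum : (∑ ℓ ∈ Finset.range (k + 1), if Even ℓ then a ℓ else 0) = 1)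
    {δ : ℝ} (hδ : 0 < δ) {n : ℤ} (hn : n ≠ 0) :
    Tmul a k δ n ∈ Set.Icc (Kmul δ n ^ k) (|(n : ℝ)| ^ k) := by
  rw [Tmul_eq_sum]
  refine sum_mul_mem_Icc (fun ℓ hℓ ↦ ?_) hsum fun ℓ hℓ ↦ ?_
  · split_ifs with he
    exacts [(ha ℓ (Finset.mem_range_succ_iff.mp hℓ) he).le, le_rfl]
  · exact pow_le_pow_mul_pow_sub (Kmul_pos hδ hn).le (Kmul_lt_abs hδ hn).le
      (Finset.mem_range_succ_iff.mp hℓ)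

/-- For `k ≥ 1` there is `C > 0`, depending only on `k`, such that for every family of
positive coefficients `a_{k,ℓ}` (over even `0 ≤ ℓ ≤ k`) summing to `1`, every `0 < δ < ∞`
and every nonzero `n`: `0 ≤ |n|^k − T_{δ,k/2}(n)`, with
`|n|^k − T_{δ,k/2}(n) ≤ C δ^{−1}|n|^{k−1}` for `|n| > 1/δ` and
`|n|^k − T_{δ,k/2}(n) ≤ C δ^{−k}` for `0 < |n| ≤ 1/δ`. -/
theorem stmt14 (k : ℕ) (hk : 1 ≤ k) :
    ∃ C : ℝ, 0 < C ∧ ∀ a : ℕ → ℝ,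
      (∀ ℓ, ℓ ≤ k → Even ℓ → 0 < a ℓ) →
      (∑ ℓ ∈ Finset.range (k + 1), if Even ℓ then a ℓ else 0) = 1 →
      ∀ δ : ℝ, 0 < δ → ∀ n : ℤ, n ≠ 0 →
        0 ≤ |(n : ℝ)| ^ k - Tmul a k δ n ∧
        (1 / δ < |(n : ℝ)| →
          |(n : ℝ)| ^ k - Tmul a k δ n ≤ C * δ⁻¹ * |(n : ℝ)| ^ (k - 1)) ∧
        (|(n : ℝ)| ≤ 1 / δ →
          |(n : ℝ)| ^ k - Tmul a k δ n ≤ C * δ⁻¹ ^ k) := by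
  refine ⟨k, by exact_mod_cast hk, fun a ha hsum δ hδ n hn ↦ ?_⟩
  set N := |(n : ℝ)|
  obtain ⟨hKT, hTN⟩ := Tmul_mem_Icc ha hsum hδ hn
  have hgap : N - Kmul δ n ≤ δ⁻¹ := by linarith [abs_sub_inv_lt_Kmul hδ hn, one_div δ]
  have hdiff : N ^ k - Tmul a k δ n ≤ k * N ^ (k - 1) * δ⁻¹ :=
    calc N ^ k - Tmul a k δ n ≤ N ^ k - Kmul δ n ^ k := by linarith
      _ ≤ k * N ^ (k - 1) * (N - Kmul δ n) :=
        pow_sub_pow_le_mul_pow_mul_sub (Kmul_pos hδ hn).le (Kmul_lt_abs hδ hn).le k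
      _ ≤ k * N ^ (k - 1) * δ⁻¹ := by gcongr
  refine ⟨sub_nonneg.mpr hTN, fun _ ↦ by linarith, fun hNδ ↦ ?_⟩
  calc N ^ k - Tmul a k δ n ≤ k * N ^ (k - 1) * δ⁻¹ := hdiff
    _ ≤ k * δ⁻¹ ^ (k - 1) * δ⁻¹ := by gcongr; rwa [← one_div]
    _ = k * δ⁻¹ ^ k := by rw [mul_assoc, ← pow_succ, Nat.sub_add_cancel hk]
end
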